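/- Suppose Algorithm 1 generates an infinite sequence {(xᵏ, t_k, λᵏ, r_k)}, i.e. t_{k+1} > 0 for all k, (x^{k+1}, t_{k+1}) ∈ A(λᵏ, r_k), λ^{k+1} = λᵏ + (r_k/t_{k+1}) h(x^{k+1}) and r_{k+1} = 2 r_k. If the sequence {λᵏ} is bounded and there exists an optimal dual solution (λ̄, r̄), then the sequence {r_k} is bounded; in fact r_k ≤ ‖λ̄ − λᵏ‖ + r̄ for all k. -/

import Mathlib

/-!
Let `(x, t)` be a minimizer of `L̃_{λᵏ, r_k}` with `t > 0`. Optimality of `(λ̄, r̄)` gives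
`L̃_{λᵏ, r_k}(x, t) = q̃(λᵏ, r_k) ≤ q̃(λ̄, r̄) ≤ L̃_{λ̄, r̄}(x, t)`. With `u = h x` and
`S = ‖u‖² / (2t) + t / 2`, this reads `(r_k - r̄) S ≤ ⟨λ̄ - λᵏ, u⟩ ≤ ‖λ̄ - λᵏ‖ ‖u‖`, and
`‖u‖ ≤ S` by AM-GM, so `r_k - r̄ ≤ ‖λ̄ - λᵏ‖`.
-/

noncomputable section

open Classical in
/-- The extended-real-valued smoothing function `L̃_{λ,r}(x,t)`. -/
def Ltilde {n m : ℕ} (f : EuclideanSpace ℝ (Fin n) → ℝ)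
    (h : EuclideanSpace ℝ (Fin n) → EuclideanSpace ℝ (Fin m))
    (lam : EuclideanSpace ℝ (Fin m)) (r : ℝ)
    (x : EuclideanSpace ℝ (Fin n)) (t : ℝ) : EReal :=
  if 0 < t then
    (((f x + (inner ℝ lam (h x) : ℝ) + r / (2 * t) * ‖h x‖ ^ 2 + r / 2 * t) : ℝ) : EReal)
  else if t = 0 ∧ h x = 0 then ((f x : ℝ) : EReal)
  else ⊤

/-- The augmented dual function `q̃(λ, r) = inf_{(x,t)} L̃_{λ,r}(x,t)`. -/
def qtilde {n m : ℕ} (f : EuclideanSpace ℝ (Fin n) → ℝ)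
    (h : EuclideanSpace ℝ (Fin n) → EuclideanSpace ℝ (Fin m))
    (lam : EuclideanSpace ℝ (Fin m)) (r : ℝ) : EReal :=
  ⨅ p : EuclideanSpace ℝ (Fin n) × ℝ, Ltilde f h lam r p.1 p.2

/-- The set `A(λ, r)` of global minimizers of `L̃_{λ,r}`. -/
def Aset {n m : ℕ} (f : EuclideanSpace ℝ (Fin n) → ℝ)
    (h : EuclideanSpace ℝ (Fin n) → EuclideanSpace ℝ (Fin m))
    (lam : EuclideanSpace ℝ (Fin m)) (r : ℝ) :
    Set (EuclideanSpace ℝ (Fin n) × ℝ) :=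
  {p | Ltilde f h lam r p.1 p.2 = qtilde f h lam r}

section

variable {n m : ℕ} {f : EuclideanSpace ℝ (Fin n) → ℝ}
  {h : EuclideanSpace ℝ (Fin n) → EuclideanSpace ℝ (Fin m)}

theorem Ltilde_of_pos (lam : EuclideanSpace ℝ (Fin m)) (r : ℝ) (x : EuclideanSpace ℝ (Fin n))
    {t : ℝ} (ht : 0 < t) :
    Ltilde f h lam r x t =
      ((f x + inner ℝ lam (h x) + r * (‖h x‖ ^ 2 / (2 * t) + t / 2) : ℝ) : EReal) := by
  rw [Ltilde, if_pos ht]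
  congr 1
  ring

theorem Ltilde_le_of_mem_Aset {lam lam' : EuclideanSpace ℝ (Fin m)} {r r' : ℝ}
    {x : EuclideanSpace ℝ (Fin n)} {t : ℝ} (hA : (x, t) ∈ Aset f h lam r)
    (hq : qtilde f h lam r ≤ qtilde f h lam' r') :
    Ltilde f h lam r x t ≤ Ltilde f h lam' r' x t :=
  calc Ltilde f h lam r x t = qtilde f h lam r := hA
    _ ≤ qtilde f h lam' r' := hq
    _ ≤ Ltilde f h lam' r' x t := iInf_le (fun p : _ × ℝ ↦ Ltilde f h lam' r' p.1 p.2) (x, t)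

theorem le_sq_div_add_half {t : ℝ} (ht : 0 < t) (a : ℝ) : a ≤ a ^ 2 / (2 * t) + t / 2 := by
  have : 2 * t * a ≤ a ^ 2 + t ^ 2 := by nlinarith [sq_nonneg (a - t)]
  rw [div_add_div _ _ (by positivity) two_ne_zero, le_div_iff₀ (by positivity)]
  nlinarith

theorem le_norm_sub_add_of_Ltilde_le {lam lam' : EuclideanSpace ℝ (Fin m)} {r r' : ℝ}
    {x : EuclideanSpace ℝ (Fin n)} {t : ℝ} (ht : 0 < t)
    (hL : Ltilde f h lam r x t ≤ Ltilde f h lam' r' x t) :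
    r ≤ ‖lam' - lam‖ + r' := by
  rw [Ltilde_of_pos _ _ _ ht, Ltilde_of_pos _ _ _ ht, EReal.coe_le_coe_iff] at hL
  set u := h x
  set S := ‖u‖ ^ 2 / (2 * t) + t / 2
  have hS : ‖u‖ ≤ S := le_sq_div_add_half ht ‖u‖
  have hS_pos : 0 < S := by positivity
  have hinner : inner ℝ lam' u - inner ℝ lam u ≤ ‖lam' - lam‖ * ‖u‖ := by
    rw [← inner_sub_left]
    exact real_inner_le_norm _ _
  have hN : ‖lam' - lam‖ * ‖u‖ ≤ ‖lam' - lam‖ * S := by gcongr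
  have : (r - r') * S ≤ ‖lam' - lam‖ * S := by linarith
  linarith [le_of_mul_le_mul_right this hS_pos]

end

theorem pos_of_succ_eq_two_mul {r : ℕ → ℝ} (h0 : 0 < r 0) (hsucc : ∀ k, r (k + 1) = 2 * r k) :
    ∀ k, 0 < r k
  | 0 => h0
  | k + 1 => by rw [hsucc]; exact mul_pos two_pos (pos_of_succ_eq_two_mul h0 hsucc k)

theorem stmt7_general {n m : ℕ} (f : EuclideanSpace ℝ (Fin n) → ℝ)
    (h : EuclideanSpace ℝ (Fin n) → EuclideanSpace ℝ (Fin m))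
    (x : ℕ → EuclideanSpace ℝ (Fin n)) (t : ℕ → ℝ)
    (lam : ℕ → EuclideanSpace ℝ (Fin m)) (rr : ℕ → ℝ)
    (hr0 : 0 < rr 0)
    (hstep : ∀ k, 0 < t (k + 1) ∧
      (x (k + 1), t (k + 1)) ∈ Aset f h (lam k) (rr k) ∧
      lam (k + 1) = lam k + (rr k / t (k + 1)) • h (x (k + 1)) ∧
      rr (k + 1) = 2 * rr k)
    (hlambdd : ∃ C, ∀ k, ‖lam k‖ ≤ C)
    (lambar : EuclideanSpace ℝ (Fin m)) (rbar : ℝ)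
    (hdual : ∀ (lam' : EuclideanSpace ℝ (Fin m)) (r' : ℝ), 0 < r' →
      qtilde f h lam' r' ≤ qtilde f h lambar rbar) :
    (∀ k, rr k ≤ ‖lambar - lam k‖ + rbar) ∧ ∃ B, ∀ k, rr k ≤ B := by
  have hrr_pos := pos_of_succ_eq_two_mul hr0 fun k ↦ (hstep k).2.2.2
  have hrr_le : ∀ k, rr k ≤ ‖lambar - lam k‖ + rbar := fun k ↦
    le_norm_sub_add_of_Ltilde_le (hstep k).1
      (Ltilde_le_of_mem_Aset (hstep k).2.1 (hdual _ _ (hrr_pos k)))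
  obtain ⟨C, hC⟩ := hlambdd
  refine ⟨hrr_le, ‖lambar‖ + C + rbar, fun k ↦ ?_⟩
  linarith [hrr_le k, norm_sub_le lambar (lam k), hC k]

/-- along an infinite run of Algorithm 1, if `{λᵏ}` is bounded and there is an
optimal dual solution `(λ̄, r̄)`, then `r_k ≤ ‖λ̄ − λᵏ‖ + r̄` for all `k`; in particular
`{r_k}` is bounded. -/
theorem stmt7 {n m : ℕ} (f : EuclideanSpace ℝ (Fin n) → ℝ)
    (h : EuclideanSpace ℝ (Fin n) → EuclideanSpace ℝ (Fin m))
    (hf : ContDiff ℝ 2 f) (hh : ContDiff ℝ 2 h)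
    (x : ℕ → EuclideanSpace ℝ (Fin n)) (t : ℕ → ℝ)
    (lam : ℕ → EuclideanSpace ℝ (Fin m)) (rr : ℕ → ℝ)
    (hr0 : 0 < rr 0)
    (hstep : ∀ k, 0 < t (k + 1) ∧
      (x (k + 1), t (k + 1)) ∈ Aset f h (lam k) (rr k) ∧
      lam (k + 1) = lam k + (rr k / t (k + 1)) • h (x (k + 1)) ∧
      rr (k + 1) = 2 * rr k)
    (hlambdd : ∃ C, ∀ k, ‖lam k‖ ≤ C)
    (lambar : EuclideanSpace ℝ (Fin m)) (rbar : ℝ) (hrbar : 0 < rbar)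
    (hdual : ∀ (lam' : EuclideanSpace ℝ (Fin m)) (r' : ℝ), 0 < r' →
      qtilde f h lam' r' ≤ qtilde f h lambar rbar) :
    (∀ k, rr k ≤ ‖lambar - lam k‖ + rbar) ∧ ∃ B, ∀ k, rr k ≤ B :=
  stmt7_general f h x t lam rr hr0 hstep hlambdd lambar rbar hdual
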